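/- Suppose f and M are real-valued functions on ℝ^ℕ satisfying the Lipschitz conditions |f(x) − f(y)| ≤ Σ_j a_j |x_j − y_j| and |M(x) − M(y)| ≤ Σ_j m_j |x_j − y_j| with Σ_j a_j + κ·Σ_j m_j < 1, where κ = (E|ζ₀|^r)^{1/r} for an i.i.d. sequence (ζ_t) with E|ζ₀|^r < ∞, r ≥ 1. If X is the stationary causal solution of X_t = M(X_{t-1}, X_{t-2}, …)·ζ_t + f(X_{t-1}, X_{t-2}, …), then E[|X₀|^r] ≤ ((|f(0)| + κ|M(0)|) / (1 − Σ_j a_j − κ Σ_j m_j))^r, assuming f(0), M(0) denote the values at the zero sequence. -/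

import Mathlib

/-!
Write `‖·‖_r` for the `L^r` norm. The weighted Lipschitz bounds give pointwise
`|f(X_{-1}, X_{-2}, …)| ≤ |f(0)| + Σ_j a_j |X_{-j-1}|`, so by Minkowski's inequality for series and
stationarity `‖f(X_{-1}, …)‖_r ≤ |f(0)| + (Σ_j a_j) ‖X_0‖_r`, and likewise for `M`. Since `ζ_0` is
independent of the past, `‖M(X_{-1}, …) ζ_0‖_r = ‖M(X_{-1}, …)‖_r κ`. The triangle inequality
applied to the equation at time `0` then gives
`‖X_0‖_r ≤ |f(0)| + κ |M(0)| + (Σ_j a_j + κ Σ_j m_j) ‖X_0‖_r`, and as `‖X_0‖_r < ∞` the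
contraction condition lets us solve for `‖X_0‖_r`.
-/

open MeasureTheory ProbabilityTheory Filter Topology

theorem tendsto_tsum_indicator_Ici_atTop_zero {G : Type*} [AddCommGroup G] [TopologicalSpace G]
    [IsTopologicalAddGroup G] [T2Space G] (g : ℕ → G) :
    Tendsto (fun n => ∑' j, (Set.Ici n).indicator g j) atTop (𝓝 0) := by
  refine (tendsto_sum_nat_add g).congr fun n => ?_
  refine (tsum_congr fun k => ?_).trans
    (Function.Injective.tsum_eq (add_left_injective n) fun j hj => ?_)
  · simp
  · have : n ≤ j := by by_contra h; exact hj (Set.indicator_of_notMem h g)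
    exact ⟨j - n, Nat.sub_add_cancel this⟩

section Lp

variable {Ω : Type*} [MeasurableSpace Ω] {μ : Measure Ω}

theorem eLpNorm_tsum_le {E : Type*} [NormedAddCommGroup E] [CompleteSpace E] {f : ℕ → Ω → E}
    (hf : ∀ n, AEStronglyMeasurable (f n) μ) {p : ENNReal} (hp : 1 ≤ p) :
    eLpNorm (fun ω => ∑' n, f n ω) p μ ≤ ∑' n, eLpNorm (f n) p μ := by
  by_cases htop : ∑' n, eLpNorm (f n) p μ = ⊤
  · exact htop ▸ le_top
  have hsum : ∀ᵐ ω ∂μ, Summable fun n => f n ω :=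
    (summable_norm_of_tsum_eLpNorm_ne_top hp hf htop).mono fun ω h => h.of_norm
  refine Lp.eLpNorm_le_of_ae_tendsto (u := atTop) (f := fun N => ∑ n ∈ Finset.range N, f n)
    (Eventually.of_forall fun N => ?_) (fun N => Finset.aestronglyMeasurable_sum _ fun n _ => hf n)
    (hsum.mono fun ω h => ?_)
  · exact (eLpNorm_sum_le (fun n _ => hf n) hp).trans (ENNReal.sum_le_tsum _)
  · simpa only [Finset.sum_apply] using h.hasSum.tendsto_sum_nat

theorem ProbabilityTheory.IndepFun.eLpNorm_mul_eq {𝕜 : Type*} [NormedDivisionRing 𝕜]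
    [MeasurableSpace 𝕜] [OpensMeasurableSpace 𝕜] {f g : Ω → 𝕜} (hfg : IndepFun f g μ)
    (hf : AEMeasurable f μ) (hg : AEMeasurable g μ) {p : ENNReal} (hp0 : p ≠ 0) (hpt : p ≠ ⊤) :
    eLpNorm (f * g) p μ = eLpNorm f p μ * eLpNorm g p μ := by
  simp only [eLpNorm_eq_lintegral_rpow_enorm_toReal hp0 hpt]
  rw [← ENNReal.mul_rpow_of_nonneg _ _ (by positivity)]
  congr 1
  simp only [Pi.mul_apply, enorm_mul, ENNReal.mul_rpow_of_nonneg _ _ ENNReal.toReal_nonneg]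
  exact lintegral_mul_eq_lintegral_mul_lintegral_of_indepFun'' (hf.enorm.pow_const _)
    (hg.enorm.pow_const _) (hfg.comp (measurable_enorm.pow_const _) (measurable_enorm.pow_const _))

theorem integral_abs_rpow_eq_lpNorm_rpow {g : Ω → ℝ} (hg : AEStronglyMeasurable g μ) {r : ℝ}
    (hr : 0 < r) : ∫ ω, |g ω| ^ r ∂μ = lpNorm g (ENNReal.ofReal r) μ ^ r := by
  rw [lpNorm_eq_integral_norm_rpow_toReal (by simpa using hr) ENNReal.ofReal_ne_top hg,
    ENNReal.toReal_ofReal hr.le, Real.rpow_inv_rpow (integral_nonneg fun _ => by positivity) hr.ne']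
  rfl

end Lp

def WeightedLipschitz (w : ℕ → ℝ) (F : (ℕ → ℝ) → ℝ) : Prop :=
  ∀ x y, |F x - F y| ≤ ∑' j, w j * |x j - y j|

namespace WeightedLipschitz

variable {F : (ℕ → ℝ) → ℝ} {w : ℕ → ℝ}

theorem continuous_comp_indicator_Iio (hF : WeightedLipschitz w F) (n : ℕ) :
    Continuous fun x => F ((Set.Iio n).indicator x) := by
  have hdist (x y : ℕ → ℝ) : dist (F ((Set.Iio n).indicator y)) (F ((Set.Iio n).indicator x))
      ≤ ∑ j ∈ Finset.range n, w j * |y j - x j| := calc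
    _ ≤ ∑' j, w j * |(Set.Iio n).indicator y j - (Set.Iio n).indicator x j| := hF _ _
    _ = ∑ j ∈ Finset.range n, w j * |(Set.Iio n).indicator y j - (Set.Iio n).indicator x j| :=
      tsum_eq_sum fun j hj => by simp_all
    _ = ∑ j ∈ Finset.range n, w j * |y j - x j| := Finset.sum_congr rfl fun j hj => by simp_all
  refine continuous_iff_continuousAt.2 fun x => tendsto_iff_dist_tendsto_zero.2 ?_
  refine squeeze_zero (fun _ => dist_nonneg) (fun y => hdist x y) ?_
  have : Continuous fun y : ℕ → ℝ => ∑ j ∈ Finset.range n, w j * |y j - x j| := by fun_prop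
  simpa using this.tendsto x

theorem tendsto_comp_indicator_Iio (hF : WeightedLipschitz w F) (x : ℕ → ℝ) :
    Tendsto (fun n => F ((Set.Iio n).indicator x)) atTop (𝓝 (F x)) := by
  refine tendsto_iff_dist_tendsto_zero.2 (squeeze_zero (fun _ => dist_nonneg) (fun n => ?_)
    (tendsto_tsum_indicator_Ici_atTop_zero fun j => w j * |x j|))
  refine (hF _ _).trans_eq (tsum_congr fun j => ?_)
  by_cases h : j < n <;> simp [h, le_of_not_gt]

/-- `F` need not be continuous for the product topology, but it is the pointwise limit of its
continuous finite-dimensional truncations. -/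
theorem measurable (hF : WeightedLipschitz w F) : Measurable F :=
  measurable_of_tendsto_metrizable (fun n => (hF.continuous_comp_indicator_Iio n).measurable)
    (tendsto_pi_nhds.2 hF.tendsto_comp_indicator_Iio)

variable {Ω : Type*} [MeasurableSpace Ω] {μ : Measure Ω} [IsProbabilityMeasure μ]

theorem eLpNorm_comp_le (hF : WeightedLipschitz w F) (hw : ∀ j, 0 ≤ w j) (hws : Summable w)
    {Y : Ω → ℕ → ℝ} (hY : Measurable Y) {p : ENNReal} (hp : 1 ≤ p) {C : ℝ} (hC : 0 ≤ C)
    (hYC : ∀ j, eLpNorm (fun ω => Y ω j) p μ ≤ ENNReal.ofReal C) :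
    eLpNorm (fun ω => F (Y ω)) p μ ≤ ENNReal.ofReal (|F fun _ => 0| + (∑' j, w j) * C) := by
  set H : Ω → ℝ := fun ω => ∑' j, w j * |Y ω j|
  have hwY (j : ℕ) : Measurable fun ω => w j * |Y ω j| :=
    measurable_const.mul ((measurable_pi_apply j).comp hY).abs
  have hFH (ω : Ω) : ‖F (Y ω)‖ ≤ |F fun _ => 0| + H ω := by
    have := hF (Y ω) fun _ => 0
    simp only [sub_zero] at this
    rw [Real.norm_eq_abs]
    linarith [abs_sub_abs_le_abs_sub (F (Y ω)) (F fun _ => 0)]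
  have hH : eLpNorm H p μ ≤ ENNReal.ofReal ((∑' j, w j) * C) := calc
    _ ≤ ∑' j, eLpNorm (fun ω => w j * |Y ω j|) p μ :=
      eLpNorm_tsum_le (fun j => (hwY j).aestronglyMeasurable) hp
    _ = ∑' j, ENNReal.ofReal (w j) * eLpNorm (fun ω => Y ω j) p μ := tsum_congr fun j => by
      rw [← Real.enorm_of_nonneg (hw j), ← eLpNorm_norm (fun ω => Y ω j), ← eLpNorm_const_smul]
      rfl
    _ ≤ ∑' j, ENNReal.ofReal (w j) * ENNReal.ofReal C := by gcongr with j; exact hYC j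
    _ = ENNReal.ofReal ((∑' j, w j) * C) := by
      rw [ENNReal.tsum_mul_right, ← ENNReal.ofReal_tsum_of_nonneg hw hws,
        ENNReal.ofReal_mul (tsum_nonneg hw)]
  calc _ ≤ eLpNorm (fun ω => |F fun _ => 0| + H ω) p μ := eLpNorm_mono_real hFH
    _ ≤ eLpNorm (fun _ => |F fun _ => 0|) p μ + eLpNorm H p μ :=
      eLpNorm_add_le aestronglyMeasurable_const (Measurable.tsum hwY).aestronglyMeasurable hp
    _ ≤ ENNReal.ofReal |F fun _ => 0| + ENNReal.ofReal ((∑' j, w j) * C) := by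
      gcongr
      rw [eLpNorm_const _ (zero_lt_one.trans_le hp).ne' (IsProbabilityMeasure.ne_zero μ)]
      simp [Real.enorm_eq_ofReal_abs]
    _ = _ := (ENNReal.ofReal_add (abs_nonneg _) (mul_nonneg (tsum_nonneg hw) hC)).symm

end WeightedLipschitz

theorem eLpNorm_affine_comp_le {Ω : Type*} [MeasurableSpace Ω] {μ : Measure Ω}
    [IsProbabilityMeasure μ] {f M : (ℕ → ℝ) → ℝ} {a m : ℕ → ℝ}
    (hf : WeightedLipschitz a f) (hM : WeightedLipschitz m M) (ha : ∀ j, 0 ≤ a j)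
    (hm : ∀ j, 0 ≤ m j) (ha_sum : Summable a) (hm_sum : Summable m)
    {Y : Ω → ℕ → ℝ} (hY : Measurable Y) {ξ : Ω → ℝ} (hξ : Measurable ξ) (hYξ : IndepFun Y ξ μ)
    {p : ENNReal} (hp : 1 ≤ p) (hp_top : p ≠ ⊤) {C : ℝ} (hC : 0 ≤ C)
    (hYC : ∀ j, eLpNorm (fun ω => Y ω j) p μ ≤ ENNReal.ofReal C) :
    eLpNorm (fun ω => M (Y ω) * ξ ω + f (Y ω)) p μ
      ≤ ENNReal.ofReal (|M fun _ => 0| + (∑' j, m j) * C) * eLpNorm ξ p μ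
        + ENNReal.ofReal (|f fun _ => 0| + (∑' j, a j) * C) := calc
  _ ≤ eLpNorm (fun ω => M (Y ω) * ξ ω) p μ + eLpNorm (fun ω => f (Y ω)) p μ :=
    eLpNorm_add_le ((hM.measurable.comp hY).mul hξ).aestronglyMeasurable
      (hf.measurable.comp hY).aestronglyMeasurable hp
  _ = eLpNorm (fun ω => M (Y ω)) p μ * eLpNorm ξ p μ + eLpNorm (fun ω => f (Y ω)) p μ := by
    congr 1
    exact (hYξ.comp hM.measurable measurable_id).eLpNorm_mul_eq
      (hM.measurable.comp hY).aemeasurable hξ.aemeasurable (zero_lt_one.trans_le hp).ne' hp_top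
  _ ≤ _ := by
    gcongr
    exacts [hM.eLpNorm_comp_le hm hm_sum hY hp hC hYC, hf.eLpNorm_comp_le ha ha_sum hY hp hC hYC]

theorem affine_causal_moment_bound_general {Ω : Type*} [MeasurableSpace Ω]
    (μ : Measure Ω) [IsProbabilityMeasure μ] (r : ℝ) (hr : 1 ≤ r)
    (ζ : ℤ → Ω → ℝ) (hζmeas : ∀ t, Measurable (ζ t))
    (hζmom : MemLp (ζ 0) (ENNReal.ofReal r) μ)
    (f M : (ℕ → ℝ) → ℝ) (a m : ℕ → ℝ)
    (ha_nonneg : ∀ j, 0 ≤ a j) (hm_nonneg : ∀ j, 0 ≤ m j)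
    (ha_sum : Summable a) (hm_sum : Summable m)
    (hf_lip : ∀ x y : ℕ → ℝ, |f x - f y| ≤ ∑' j, a j * |x j - y j|)
    (hM_lip : ∀ x y : ℕ → ℝ, |M x - M y| ≤ ∑' j, m j * |x j - y j|)
    (κ : ℝ) (hκ : κ = (∫ ω, |ζ 0 ω| ^ r ∂μ) ^ (1 / r))
    (hcontr : (∑' j, a j) + κ * (∑' j, m j) < 1)
    (X : ℤ → Ω → ℝ) (hXmeas : ∀ t, Measurable (X t))
    (hXmom : MemLp (X 0) (ENNReal.ofReal r) μ)
    (hXstat : ∀ t, Measure.map (X t) μ = Measure.map (X 0) μ)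
    (hXcausal : ∀ t : ℤ, IndepFun (ζ t) (fun ω => fun j : ℕ => X (t - (j + 1)) ω) μ)
    (hXsol : ∀ t : ℤ, ∀ᵐ ω ∂μ,
      X t ω = M (fun j => X (t - (j + 1)) ω) * ζ t ω + f (fun j => X (t - (j + 1)) ω)) :
    (∫ ω, |X 0 ω| ^ r ∂μ)
      ≤ ((|f (fun _ => 0)| + κ * |M (fun _ => 0)|)
          / (1 - (∑' j, a j) - κ * (∑' j, m j))) ^ r := by
  have hr0 : 0 < r := zero_lt_one.trans_le hr
  set n := lpNorm (X 0) (ENNReal.ofReal r) μ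
  set A := ∑' j, a j
  set B := ∑' j, m j
  have hn0 : 0 ≤ n := lpNorm_nonneg
  have hA0 : 0 ≤ A := tsum_nonneg ha_nonneg
  have hB0 : 0 ≤ B := tsum_nonneg hm_nonneg
  have hκ_eq : κ = lpNorm (ζ 0) (ENNReal.ofReal r) μ := by
    rw [hκ, integral_abs_rpow_eq_lpNorm_rpow (hζmeas 0).aestronglyMeasurable hr0, one_div,
      Real.rpow_rpow_inv lpNorm_nonneg hr0.ne']
  have hκ0 : 0 ≤ κ := hκ_eq ▸ lpNorm_nonneg
  have hpast (j : ℕ) : eLpNorm (X (0 - (j + 1))) (ENNReal.ofReal r) μ ≤ ENNReal.ofReal n :=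
    (IdentDistrib.eLpNorm_eq ⟨(hXmeas _).aemeasurable, (hXmeas 0).aemeasurable, hXstat _⟩ _).trans
      (ofReal_lpNorm hXmom).symm |>.le
  have hstep : ENNReal.ofReal n
      ≤ ENNReal.ofReal ((|M fun _ => 0| + B * n) * κ + (|f fun _ => 0| + A * n)) := by
    rw [ofReal_lpNorm hXmom, eLpNorm_congr_ae (hXsol 0), ENNReal.ofReal_add (by positivity)
      (by positivity), ENNReal.ofReal_mul (by positivity), hκ_eq, ofReal_lpNorm hζmom]
    exact eLpNorm_affine_comp_le hf_lip hM_lip ha_nonneg hm_nonneg ha_sum hm_sum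
      (measurable_pi_lambda _ fun j => hXmeas _) (hζmeas 0) (hXcausal 0).symm
      (ENNReal.one_le_ofReal.2 hr) ENNReal.ofReal_ne_top hn0 hpast
  have hn : n ≤ (|f fun _ => 0| + κ * |M fun _ => 0|) / (1 - A - κ * B) := by
    have := (ENNReal.ofReal_le_ofReal_iff (by positivity)).1 hstep
    rw [le_div_iff₀ (by linarith)]
    linarith
  calc ∫ ω, |X 0 ω| ^ r ∂μ = n ^ r :=
        integral_abs_rpow_eq_lpNorm_rpow (hXmeas 0).aestronglyMeasurable hr0
    _ ≤ _ := Real.rpow_le_rpow hn0 hn hr0.le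

/-- Quantitative `r`-th moment bound for the stationary causal solution of the affine
causal equation `X_t = M(X_{t−1},…)ζ_t + f(X_{t−1},…)` under the contraction condition
`Σ a_j + κ Σ m_j < 1`, where `κ = (E|ζ₀|^r)^{1/r}`. -/
theorem affine_causal_moment_bound {Ω : Type*} [MeasurableSpace Ω]
    (μ : Measure Ω) [IsProbabilityMeasure μ] (r : ℝ) (hr : 1 ≤ r)
    (ζ : ℤ → Ω → ℝ) (hζmeas : ∀ t, Measurable (ζ t))
    (hζindep : iIndepFun ζ μ)
    (hζid : ∀ t, Measure.map (ζ t) μ = Measure.map (ζ 0) μ)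
    (hζmom : MemLp (ζ 0) (ENNReal.ofReal r) μ)
    (f M : (ℕ → ℝ) → ℝ) (a m : ℕ → ℝ)
    (ha_nonneg : ∀ j, 0 ≤ a j) (hm_nonneg : ∀ j, 0 ≤ m j)
    (ha_sum : Summable a) (hm_sum : Summable m)
    (hf_lip : ∀ x y : ℕ → ℝ, |f x - f y| ≤ ∑' j, a j * |x j - y j|)
    (hM_lip : ∀ x y : ℕ → ℝ, |M x - M y| ≤ ∑' j, m j * |x j - y j|)
    (κ : ℝ) (hκ : κ = (∫ ω, |ζ 0 ω| ^ r ∂μ) ^ (1 / r))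
    (hcontr : (∑' j, a j) + κ * (∑' j, m j) < 1)
    (X : ℤ → Ω → ℝ) (hXmeas : ∀ t, Measurable (X t))
    (hXmom : MemLp (X 0) (ENNReal.ofReal r) μ)
    (hXstat : ∀ t, Measure.map (X t) μ = Measure.map (X 0) μ)
    (hXcausal : ∀ t : ℤ, IndepFun (ζ t) (fun ω => fun j : ℕ => X (t - (j + 1)) ω) μ)
    (hXsol : ∀ t : ℤ, ∀ᵐ ω ∂μ,
      X t ω = M (fun j => X (t - (j + 1)) ω) * ζ t ω + f (fun j => X (t - (j + 1)) ω)) :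
    (∫ ω, |X 0 ω| ^ r ∂μ)
      ≤ ((|f (fun _ => 0)| + κ * |M (fun _ => 0)|)
          / (1 - (∑' j, a j) - κ * (∑' j, m j))) ^ r :=
  affine_causal_moment_bound_general μ r hr ζ hζmeas hζmom f M a m ha_nonneg hm_nonneg ha_sum hm_sum
    hf_lip hM_lip κ hκ hcontr X hXmeas hXmom hXstat hXcausal hXsol
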